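/- In dimension d = 1 with 𝒬 bounded away from 0, α = 1, β = 0, γ = 0: given b, h, σ, f with σ(t,x) ≠ 0, and given V of the form V(t,x) = V(t,0) + ∂_x V(t,0) ∫_0^x e^{−2∫_0^z h(t,v)/σ²(t,v) dv} dz, the unique functions g₁, g₂, g₃ solving the system { ∂_t V + b ∂_x V = G(g₁); h ∂_x V + (σ²/2) ∂²_x V = 0; σ ∂_x V = g₂; V(t,x+f(t,x,u)) − V(t,x) = g₃ } are g₁(t,x) = G⁻¹(∂_t V(t,x) + b(t,x) ∂_x V(t,0) e^{−2∫_0^x h/σ² dv}), g₂(t,x) = σ(t,x) ∂_x V(t,0) e^{−2∫_0^x h/σ² dv}, and g₃(t,x,u) = ∂_x V(t,0) ∫_x^{x+f(t,x,u)} e^{−2∫_0^z h/σ² dv} dz. -/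
import Mathlib


open intervalIntegral

private lemma prim_hasDerivAt {f : ℝ → ℝ} (hf : Continuous f) (x : ℝ) :
    HasDerivAt (fun u => ∫ t in (0:ℝ)..u, f t) (f x) x :=
  integral_hasDerivAt_right (hf.intervalIntegrable _ _)
    (hf.stronglyMeasurableAtFilter _ _) hf.continuousAt

section Gstuff
variable {𝒬 : Set ℝ} {ι : ℝ} {G : ℝ → ℝ}

private lemma G_bijective (hne : 𝒬.Nonempty) (hcpt : IsCompact 𝒬)
    (hι : 0 < ι) (hbd : ∀ q ∈ 𝒬, ι ≤ q ^ 2)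
    (hG : ∀ a, G a = (1 / 2) * sSup ((fun q => q ^ 2 * a) '' 𝒬)) :
    Function.Bijective G := by
  set S : Set ℝ := (fun q => q ^ 2) '' 𝒬 with hS
  have hSne : S.Nonempty := hne.image _
  have hScpt : IsCompact S := hcpt.image (by continuity)
  have hM : IsGreatest S (sSup S) := hScpt.isGreatest_sSup hSne
  have hm : IsLeast S (sInf S) := hScpt.isLeast_sInf hSne
  set M := sSup S
  set m := sInf S
  have hmpos : 0 < m := by
    obtain ⟨q, hq, hq2⟩ := hm.1
    have := hbd q hq; simp only at hq2; linarith [hq2 ▸ this]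
  have hmM : m ≤ M := hm.2 hM.1
  have hform : ∀ a, G a = (1 / 2) * (if 0 ≤ a then M * a else m * a) := by
    intro a
    rw [hG a]
    congr 1
    have himg : (fun q => q ^ 2 * a) '' 𝒬 = (fun y => y * a) '' S := by
      rw [hS, Set.image_image]
    rw [himg]
    by_cases ha : 0 ≤ a
    · rw [if_pos ha]
      refine IsGreatest.csSup_eq ⟨⟨M, hM.1, rfl⟩, ?_⟩
      rintro _ ⟨y, hy, rfl⟩
      exact mul_le_mul_of_nonneg_right (hM.2 hy) ha
    · rw [if_neg ha]
      refine IsGreatest.csSup_eq ⟨⟨m, hm.1, rfl⟩, ?_⟩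
      rintro _ ⟨y, hy, rfl⟩
      exact mul_le_mul_of_nonpos_right (hm.2 hy) (le_of_not_ge ha)
  constructor
  · have : StrictMono G := by
      intro a c hac
      rw [hform a, hform c]
      rcases le_or_gt 0 a with ha | ha
      · rw [if_pos ha, if_pos (le_of_lt (lt_of_le_of_lt ha hac))]
        have : 0 < M := lt_of_lt_of_le hmpos hmM
        nlinarith
      · rcases le_or_gt 0 c with hc | hc
        · rw [if_neg (not_le.mpr ha), if_pos hc]
          have : 0 < M := lt_of_lt_of_le hmpos hmM
          nlinarith
        · rw [if_neg (not_le.mpr ha), if_neg (not_le.mpr hc)]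
          nlinarith
    exact this.injective
  · intro y
    have hMpos : 0 < M := lt_of_lt_of_le hmpos hmM
    rcases le_or_gt 0 y with hy | hy
    · refine ⟨2 * y / M, ?_⟩
      rw [hform]
      rw [if_pos (by positivity)]
      field_simp
    · refine ⟨2 * y / m, ?_⟩
      have h1 : 2 * y / m < 0 := div_neg_of_neg_of_pos (by linarith) hmpos
      rw [hform, if_neg (not_le.mpr h1)]
      field_simp
end Gstuff

/-- In dimension `d = 1` with `𝒬` bounded away from `0`, `α = 1`,
`β = 0`, `γ = 0`: given `b, h, σ, f` with `σ` never vanishing, `h/σ²` continuous,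
and `V` of the explicit form
`V(t,x) = V(t,0) + ∂ₓV(t,0) ∫_0^x e^{-2∫_0^z h(t,v)/σ²(t,v) dv} dz`, the unique
functions `g₁, g₂, g₃` solving the system
`{∂_tV + b ∂ₓV = G(g₁); h ∂ₓV + (σ²/2) ∂ₓ²V = 0; σ ∂ₓV = g₂;
V(t, x+f(t,x,u)) - V(t,x) = g₃}` are the explicit ones
`g₁ = G⁻¹(∂_tV + b ∂ₓV(t,0) e^{-2∫_0^x h/σ²})`,
`g₂ = σ ∂ₓV(t,0) e^{-2∫_0^x h/σ²}`,
`g₃ = ∂ₓV(t,0) ∫_x^{x+f} e^{-2∫_0^z h/σ²} dz`. -/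
theorem explicit_g_formulas_iff
    (𝒬 : Set ℝ) (hne : 𝒬.Nonempty) (hcpt : IsCompact 𝒬)
    (ι : ℝ) (hι : 0 < ι) (hbd : ∀ q ∈ 𝒬, ι ≤ q ^ 2)
    (G : ℝ → ℝ) (hG : ∀ a, G a = (1 / 2) * sSup ((fun q => q ^ 2 * a) '' 𝒬))
    (b h σ : ℝ → ℝ → ℝ) (f : ℝ → ℝ → ℝ → ℝ)
    (hσ0 : ∀ t x, σ t x ≠ 0)
    (hratio : ∀ t, Continuous fun v => h t v / (σ t v) ^ 2)
    (V : ℝ → ℝ → ℝ)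
    (hVt : ∀ x, Differentiable ℝ fun t => V t x)
    (hVx : ∀ t, Differentiable ℝ (V t))
    (hVxx : ∀ t, Differentiable ℝ (deriv (V t)))
    (hV : ∀ t x, V t x = V t 0 + deriv (V t) 0 *
      ∫ z in (0:ℝ)..x, Real.exp (-2 * ∫ v in (0:ℝ)..z, h t v / (σ t v) ^ 2))
    (g₁ g₂ : ℝ → ℝ → ℝ) (g₃ : ℝ → ℝ → ℝ → ℝ) :
    ((∀ t x, deriv (fun τ => V τ x) t + b t x * deriv (V t) x = G (g₁ t x)) ∧
     (∀ t x, h t x * deriv (V t) x +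
        (σ t x) ^ 2 / 2 * deriv (deriv (V t)) x = 0) ∧
     (∀ t x, σ t x * deriv (V t) x = g₂ t x) ∧
     (∀ t x u, V t (x + f t x u) - V t x = g₃ t x u))
    ↔
    ((∀ t x, g₁ t x = Function.invFun G (deriv (fun τ => V τ x) t +
        b t x * deriv (V t) 0 *
          Real.exp (-2 * ∫ v in (0:ℝ)..x, h t v / (σ t v) ^ 2))) ∧
     (∀ t x, g₂ t x = σ t x * deriv (V t) 0 *
        Real.exp (-2 * ∫ v in (0:ℝ)..x, h t v / (σ t v) ^ 2)) ∧
     (∀ t x u, g₃ t x u = deriv (V t) 0 *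
        ∫ z in x..(x + f t x u),
          Real.exp (-2 * ∫ v in (0:ℝ)..z, h t v / (σ t v) ^ 2))) := by
  obtain ⟨hGinj, hGsurj⟩ := G_bijective hne hcpt hι hbd hG
  set E : ℝ → ℝ → ℝ :=
    fun t z => Real.exp (-2 * ∫ v in (0:ℝ)..z, h t v / (σ t v) ^ 2) with hE
  have hEcont : ∀ t, Continuous (E t) := fun t =>
    Real.continuous_exp.comp (continuous_const.mul
      (continuous_primitive (fun a c => (hratio t).intervalIntegrable a c) 0))
  have hEderiv : ∀ t x, HasDerivAt (E t)
      (E t x * (-2 * (h t x / (σ t x) ^ 2))) x := fun t x =>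
    (((prim_hasDerivAt (hratio t) x).const_mul (-2)).exp)
  -- derivative of V in x
  have hVx' : ∀ t x, deriv (V t) x = deriv (V t) 0 * E t x := by
    intro t x
    have hVeq : V t = fun y => V t 0 + deriv (V t) 0 * ∫ z in (0:ℝ)..y, E t z :=
      funext (hV t)
    have hD0 : HasDerivAt (fun y => V t 0 + deriv (V t) 0 * ∫ z in (0:ℝ)..y, E t z)
        (deriv (V t) 0 * E t x) x :=
      ((prim_hasDerivAt (hEcont t) x).const_mul _).const_add _
    exact (hD0.congr_of_eventuallyEq (Filter.Eventually.of_forall (hV t))).deriv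
  -- second derivative
  have hVxx' : ∀ t x, deriv (deriv (V t)) x =
      deriv (V t) 0 * (E t x * (-2 * (h t x / (σ t x) ^ 2))) := by
    intro t x
    have hDeq : deriv (V t) = fun y => deriv (V t) 0 * E t y := funext (hVx' t)
    have hD0 : HasDerivAt (fun y => deriv (V t) 0 * E t y)
        (deriv (V t) 0 * (E t x * (-2 * (h t x / (σ t x) ^ 2)))) x :=
      (hEderiv t x).const_mul _
    exact (hD0.congr_of_eventuallyEq (Filter.Eventually.of_forall (hVx' t))).deriv
  -- equation 2 always holds
  have heq2 : ∀ t x, h t x * deriv (V t) x +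
      (σ t x) ^ 2 / 2 * deriv (deriv (V t)) x = 0 := by
    intro t x
    rw [hVx', hVxx']
    have hs := hσ0 t x
    field_simp
    ring
  -- equation 4 rewrite
  have heq4 : ∀ t x u, V t (x + f t x u) - V t x =
      deriv (V t) 0 * ∫ z in x..(x + f t x u), E t z := by
    intro t x u
    rw [hV t (x + f t x u), hV t x]
    rw [← intervalIntegral.integral_interval_sub_left
      ((hEcont t).intervalIntegrable 0 (x + f t x u))
      ((hEcont t).intervalIntegrable 0 x)]
    ring
  constructor
  · rintro ⟨e1, e2, e3, e4⟩
    refine ⟨fun t x => ?_, fun t x => ?_, fun t x u => ?_⟩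
    · have h1 := e1 t x
      rw [hVx' t x, ← mul_assoc] at h1
      show g₁ t x = Function.invFun G
        (deriv (fun τ => V τ x) t + b t x * deriv (V t) 0 * E t x)
      rw [h1]
      exact (Function.leftInverse_invFun hGinj _).symm
    · show g₂ t x = σ t x * deriv (V t) 0 * E t x
      rw [← e3 t x, hVx' t x, mul_assoc]
    · show g₃ t x u = deriv (V t) 0 * ∫ z in x..(x + f t x u), E t z
      rw [← e4 t x u, heq4 t x u]
  · rintro ⟨e1, e3, e4⟩
    refine ⟨fun t x => ?_, heq2, fun t x => ?_, fun t x u => ?_⟩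
    · have h1 : g₁ t x = Function.invFun G
          (deriv (fun τ => V τ x) t + b t x * deriv (V t) 0 * E t x) := e1 t x
      rw [h1, Function.rightInverse_invFun hGsurj, hVx' t x, mul_assoc]
    · have h3 : g₂ t x = σ t x * deriv (V t) 0 * E t x := e3 t x
      rw [h3, hVx' t x, mul_assoc]
    · have h4 : g₃ t x u = deriv (V t) 0 * ∫ z in x..(x + f t x u), E t z := e4 t x u
      rw [heq4 t x u, h4]
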